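/- Let a ∈ 𝔹² (unit ball in ℂ²) with a ≠ 0. Let B₁ = B(0, 1/2) (Euclidean ball of radius 1/2) and suppose a ∈ B₁. Then the unique point of the sphere ∂B₁ closest to a with respect to the Kobayashi distance of 𝔹² is the point p = (1/(2‖a‖))·a, i.e., the radial projection of a onto ∂B₁. -/

import Mathlib

/-- Inverse hyperbolic tangent: `artanh x = ½ log((1+x)/(1-x))`. -/
noncomputable def artanh (x : ℝ) : ℝ := (1 / 2) * Real.log ((1 + x) / (1 - x))

/-- The Kobayashi distance of the unit ball `𝔹² ⊂ ℂ²`, given by the explicit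
formula `k(z,w) = artanh ‖φ_z(w)‖`, where
`‖φ_z(w)‖² = 1 - (1-‖z‖²)(1-‖w‖²)/|1-⟨z,w⟩|²`. -/
noncomputable def kobayashiBall (z w : EuclideanSpace ℂ (Fin 2)) : ℝ :=
  artanh (Real.sqrt
    (1 - (1 - ‖z‖ ^ 2) * (1 - ‖w‖ ^ 2) /
      ‖(1 - (inner ℂ z w : ℂ))‖ ^ 2))

lemma artanh_strictMono {x y : ℝ} (hx : 0 ≤ x) (hxy : x < y) (hy : y < 1) :
    artanh x < artanh y := by
  unfold artanh
  have h1 : (0:ℝ) < 1 - x := by linarith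
  have h2 : (0:ℝ) < 1 - y := by linarith
  have h3 : (0:ℝ) < (1 + x) / (1 - x) := by positivity
  have h4 : (1 + x) / (1 - x) < (1 + y) / (1 - y) := by
    rw [div_lt_div_iff₀ h1 h2]; nlinarith
  have := Real.log_lt_log h3 h4
  linarith

/-- lower bound on `|1 - ⟨a,l⟩|` for `l` on the sphere of radius 1/2. -/
lemma D_lower (a l : EuclideanSpace ℂ (Fin 2)) (hl : ‖l‖ = 1/2) :
    1 - ‖a‖/2 ≤ ‖1 - (inner ℂ a l : ℂ)‖ := by
  have h1 : ‖(inner ℂ a l : ℂ)‖ ≤ ‖a‖ * ‖l‖ := norm_inner_le_norm a l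
  rw [hl] at h1
  have h2 : ‖(1:ℂ)‖ - ‖(inner ℂ a l : ℂ)‖ ≤ ‖1 - (inner ℂ a l : ℂ)‖ := by
    have := norm_sub_norm_le (1:ℂ) (inner ℂ a l : ℂ)
    linarith
  simp only [norm_one] at h2
  linarith

lemma kob_comparison (a : EuclideanSpace ℂ (Fin 2)) (hr : 0 < ‖a‖) (hr2 : ‖a‖ < 1/2)
    (l l' : EuclideanSpace ℂ (Fin 2)) (hl : ‖l‖ = 1/2) (hl' : ‖l'‖ = 1/2)
    (hD : ‖1 - (inner ℂ a l : ℂ)‖ < ‖1 - (inner ℂ a l' : ℂ)‖) :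
    kobayashiBall a l < kobayashiBall a l' := by
  set r := ‖a‖ with hrdef
  set D := ‖1 - (inner ℂ a l : ℂ)‖ with hDdef
  set D' := ‖1 - (inner ℂ a l' : ℂ)‖ with hD'def
  have hDlb : 1 - r/2 ≤ D := D_lower a l hl
  have hD'lb : 1 - r/2 ≤ D' := D_lower a l' hl'
  have hDpos : 0 < D := by linarith
  have hD'pos : 0 < D' := by linarith
  set C := (1 - r^2) * (1 - (1/2:ℝ)^2) with hCdef
  have hCpos : 0 < C := by
    have : r < 1 := by linarith
    rw [hCdef]; nlinarith
  have hCD : C < D^2 := by nlinarith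
  have hCD' : C < D'^2 := by nlinarith
  unfold kobayashiBall
  rw [hl, hl']
  have hx0 : 0 ≤ 1 - C / D^2 := by
    rw [sub_nonneg, div_le_one (by positivity)]; linarith
  have hy1 : 1 - C / D'^2 < 1 := by
    have : 0 < C / D'^2 := by positivity
    linarith
  have hxy : 1 - C / D^2 < 1 - C / D'^2 := by
    have : C / D'^2 < C / D^2 := by
      apply div_lt_div_of_pos_left hCpos (by positivity)
      nlinarith
    linarith
  apply artanh_strictMono (Real.sqrt_nonneg _) (Real.sqrt_lt_sqrt hx0 hxy)
  rw [Real.sqrt_lt' one_pos]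
  simpa using hy1

/-- For `a ∈ 𝔹²` with `0 < ‖a‖ < 1/2`, the unique point of the sphere
`∂B(0,1/2)` closest to `a` in the Kobayashi distance of `𝔹²` is the radial
projection `p = a / (2‖a‖)`. -/
theorem stmt_16 (a : EuclideanSpace ℂ (Fin 2)) (ha : a ≠ 0) (haB : ‖a‖ < 1 / 2)
    (p : EuclideanSpace ℂ (Fin 2)) (hp : p = ((1 / (2 * ‖a‖) : ℝ) : ℂ) • a) :
    p ∈ Metric.sphere (0 : EuclideanSpace ℂ (Fin 2)) (1 / 2) ∧
    (∀ l ∈ Metric.sphere (0 : EuclideanSpace ℂ (Fin 2)) (1 / 2),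
      kobayashiBall a p ≤ kobayashiBall a l) ∧
    (∀ l ∈ Metric.sphere (0 : EuclideanSpace ℂ (Fin 2)) (1 / 2),
      kobayashiBall a l = kobayashiBall a p → l = p) := by
  have hr : 0 < ‖a‖ := norm_pos_iff.mpr ha
  set r := ‖a‖ with hrdef
  clear_value r
  have hrdef' : r = ‖a‖ := hrdef
  -- norm of p
  have hpnorm : ‖p‖ = 1/2 := by
    rw [hp, norm_smul, Complex.norm_real, Real.norm_eq_abs,
      abs_of_pos (div_pos one_pos (by linarith))]
    rw [← hrdef]
    field_simp
  -- inner a p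
  have hinner_p : (inner ℂ a p : ℂ) = ((r/2 : ℝ) : ℂ) := by
    have hrne : ((r:ℝ):ℂ) ≠ 0 := by
      simp only [ne_eq, Complex.ofReal_eq_zero]; linarith
    rw [hp, inner_smul_right, @inner_self_eq_norm_sq_to_K ℂ, ← hrdef]
    push_cast
    field_simp
    rfl
  have hDp : ‖1 - (inner ℂ a p : ℂ)‖ = 1 - r/2 := by
    rw [hinner_p]
    rw [show (1 : ℂ) - ((r/2 : ℝ) : ℂ) = (((1 - r/2 : ℝ)) : ℂ) by push_cast; ring]
    rw [Complex.norm_real, Real.norm_eq_abs, abs_of_pos (by linarith)]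
  refine ⟨?_, ?_, ?_⟩
  · simpa [Metric.mem_sphere, dist_eq_norm] using hpnorm
  · intro l hl
    have hlnorm : ‖l‖ = 1/2 := by simpa [Metric.mem_sphere, dist_eq_norm] using hl
    have hDl : 1 - r/2 ≤ ‖1 - (inner ℂ a l : ℂ)‖ := by
      rw [hrdef]; exact D_lower a l hlnorm
    rcases lt_or_eq_of_le hDl with h | h
    · exact le_of_lt (kob_comparison a (hrdef ▸ hr) (hrdef ▸ haB) p l hpnorm hlnorm (by rw [hDp]; exact h))
    · unfold kobayashiBall
      rw [hpnorm, hlnorm, hDp, ← h]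
  · intro l hl hke
    have hlnorm : ‖l‖ = 1/2 := by simpa [Metric.mem_sphere, dist_eq_norm] using hl
    have hDl : 1 - r/2 ≤ ‖1 - (inner ℂ a l : ℂ)‖ := by
      rw [hrdef]; exact D_lower a l hlnorm
    -- equality of D's
    have hDeq : ‖1 - (inner ℂ a l : ℂ)‖ = 1 - r/2 := by
      by_contra hne
      have hlt : 1 - r/2 < ‖1 - (inner ℂ a l : ℂ)‖ :=
        lt_of_le_of_ne hDl (Ne.symm hne)
      have := kob_comparison a (hrdef ▸ hr) (hrdef ▸ haB) p l hpnorm hlnorm (by rw [hDp]; exact hlt)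
      linarith [hke ▸ this]
    -- deduce inner a l = r/2
    set w := (inner ℂ a l : ℂ) with hwdef
    clear_value w
    have hwle : ‖w‖ ≤ r/2 := by
      have h1 : ‖w‖ ≤ ‖a‖ * ‖l‖ := by rw [hwdef]; exact norm_inner_le_norm a l
      rw [hlnorm, ← hrdef] at h1
      linarith
    have habs2 : ‖1 - w‖ ^ 2 = (1 - r/2)^2 := by rw [hDeq]
    have habs1 : ‖1 - w‖ ^ 2 = (1 - w.re)^2 + w.im^2 := by
      rw [Complex.sq_norm, Complex.normSq_apply]
      simp [Complex.sub_re, Complex.sub_im]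
      ring
    have habsw : ‖w‖ ^ 2 = w.re^2 + w.im^2 := by
      rw [Complex.sq_norm, Complex.normSq_apply]; ring
    have hsq : 1 - 2 * w.re + (‖w‖)^2 = (1 - r/2)^2 := by
      linear_combination habsw + habs2 - habs1
    have hre_le : w.re ≤ ‖w‖ := Complex.re_le_norm w
    have hA2 : (1 - ‖w‖)^2 ≤ (1 - r/2)^2 := by nlinarith [hsq, hre_le]
    have hA : ‖w‖ = r/2 := by
      refine le_antisymm hwle ?_
      nlinarith [hA2, hwle, norm_nonneg w]
    have hre : w.re = r/2 := by
      linear_combination (-1/2)*hsq + (1/2)*(‖w‖ + r/2)*hA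
    have him2 : w.im^2 = 0 := by
      linear_combination (‖w‖ + r/2)*hA - (w.re + r/2)*hre - habsw
    have him : w.im = 0 := by
      exact pow_eq_zero_iff (two_ne_zero) |>.mp him2
    have hwre : w.re = r/2 ∧ ‖w‖ = r/2 := ⟨hre, hA⟩
    have hwval : w = ((r/2 : ℝ) : ℂ) := by
      apply Complex.ext
      · simpa using hwre.1
      · simpa using him
    -- Cauchy-Schwarz equality
    have hl0 : l ≠ 0 := by
      intro h; rw [h] at hlnorm; norm_num at hlnorm
    have hCS : ‖(inner ℂ a l : ℂ)‖ = ‖a‖ * ‖l‖ := by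
      rw [← hwdef, hwval, hlnorm, ← hrdef, Complex.norm_real, Real.norm_eq_abs,
        abs_of_pos (by linarith)]
      ring
    obtain ⟨c, hc0, hcl⟩ := (norm_inner_eq_norm_iff ha hl0).mp hCS
    -- compute c
    have hinn : (inner ℂ a l : ℂ) = c * ((r : ℝ) : ℂ)^2 := by
      rw [hcl, inner_smul_right, @inner_self_eq_norm_sq_to_K ℂ, ← hrdef]
      rfl
    have hceq : c = ((1 / (2 * r) : ℝ) : ℂ) := by
      have h1 : c * ((r:ℝ):ℂ)^2 = ((r/2 : ℝ) : ℂ) := by rw [← hinn, ← hwdef, hwval]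
      have hrne : ((r:ℝ):ℂ) ≠ 0 := by
        simp only [ne_eq, Complex.ofReal_eq_zero]; linarith
      have h2r : (2 * (r:ℂ)) ≠ 0 := mul_ne_zero two_ne_zero hrne
      have h3 : c * (r:ℂ) = (1/2 : ℂ) := by
        apply mul_right_cancel₀ hrne
        push_cast at h1 ⊢
        linear_combination h1
      push_cast
      rw [eq_div_iff h2r]
      linear_combination 2 * h3
    rw [hcl, hceq, hp]
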